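/- Let R be a ring with finite Gorenstein global dimension, and let N be a Gorenstein projective R-module admitting a short exact sequence 0 → N → P → N → 0 with P projective. Then Ext^1_R(N, Q) = 0 for every projective R-module Q, and hence N is strongly Gorenstein projective. -/

import Mathlib

universe u

open LinearMap DirectSum

section Defs

variable (R : Type u) [CommRing R]

/-- `Ext¹_R(M, Q) = 0`, expressed by the splitting of all extensions of `M` by `Q`. -/
def Ext1Zero (M Q : Type u) [AddCommGroup M] [Module R M] [AddCommGroup Q] [Module R Q] :
    Prop :=
  ∀ (E : ModuleCat.{u} R) (i : Q →ₗ[R] E) (p : E →ₗ[R] M),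
    Function.Injective i → Function.Surjective p → LinearMap.range i = LinearMap.ker p →
      ∃ s : M →ₗ[R] E, p ∘ₗ s = LinearMap.id

/-- `Tor₁^R(M, N) = 0`, expressed via flat presentations of `N`:
for every surjection `p : F ↠ N` with `F` flat, `ker p ⊗ M → F ⊗ M` is injective. -/
def Tor1Zero (M N : Type u) [AddCommGroup M] [Module R M] [AddCommGroup N] [Module R N] :
    Prop :=
  ∀ (F : ModuleCat.{u} R), Module.Flat R F →
    ∀ p : F →ₗ[R] N, Function.Surjective p →
      Function.Injective (LinearMap.rTensor M (LinearMap.ker p).subtype)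

/-- `M` is strongly Gorenstein projective: there is an exact complex
`⋯ → P → P → P → ⋯` with a single projective `P` and single differential `f`,
which stays exact under `Hom(-, Q)` for every projective `Q`, and `M ≅ Im f`. -/
def IsSGProjective (M : Type u) [AddCommGroup M] [Module R M] : Prop :=
  ∃ P : ModuleCat.{u} R, Module.Projective R P ∧
    ∃ f : P →ₗ[R] P, f ∘ₗ f = 0 ∧ LinearMap.ker f = LinearMap.range f ∧
      Nonempty (M ≃ₗ[R] LinearMap.range f) ∧
      ∀ Q : ModuleCat.{u} R, Module.Projective R Q →
        ∀ g : P →ₗ[R] Q, g ∘ₗ f = 0 → ∃ h : P →ₗ[R] Q, g = h ∘ₗ f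

/-- `M` is strongly Gorenstein flat: there is an exact complex
`⋯ → F → F → F → ⋯` with a single flat `F` and single differential `f`,
which stays exact under `- ⊗ I` for every injective `I`, and `M ≅ Im f`. -/
def IsSGFlat (M : Type u) [AddCommGroup M] [Module R M] : Prop :=
  ∃ F : ModuleCat.{u} R, Module.Flat R F ∧
    ∃ f : F →ₗ[R] F, f ∘ₗ f = 0 ∧ LinearMap.ker f = LinearMap.range f ∧
      Nonempty (M ≃ₗ[R] LinearMap.range f) ∧
      ∀ I : ModuleCat.{u} R, Module.Injective R I →
        LinearMap.ker (LinearMap.rTensor I f) = LinearMap.range (LinearMap.rTensor I f)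

/-- `M` is Gorenstein projective: it is a syzygy of a totally acyclic complex of
projective modules. -/
def IsGProjective (M : Type u) [AddCommGroup M] [Module R M] : Prop :=
  ∃ (P : ℤ → ModuleCat.{u} R) (d : ∀ i : ℤ, P (i + 1) →ₗ[R] P i),
    (∀ i, Module.Projective R (P i)) ∧
    (∀ i, d i ∘ₗ d (i + 1) = 0) ∧
    (∀ i, LinearMap.ker (d i) = LinearMap.range (d (i + 1))) ∧
    Nonempty (M ≃ₗ[R] LinearMap.range (d 0)) ∧
    ∀ Q : ModuleCat.{u} R, Module.Projective R Q →
      ∀ (i : ℤ) (g : P (i + 1) →ₗ[R] Q), g ∘ₗ d (i + 1) = 0 →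
        ∃ h : P i →ₗ[R] Q, g = h ∘ₗ d i

/-- `M` is Gorenstein flat: it is a syzygy of an exact complex of flat modules
which stays exact under `- ⊗ I` for every injective `I`. -/
def IsGFlat (M : Type u) [AddCommGroup M] [Module R M] : Prop :=
  ∃ (F : ℤ → ModuleCat.{u} R) (d : ∀ i : ℤ, F (i + 1) →ₗ[R] F i),
    (∀ i, Module.Flat R (F i)) ∧
    (∀ i, d i ∘ₗ d (i + 1) = 0) ∧
    (∀ i, LinearMap.ker (d i) = LinearMap.range (d (i + 1))) ∧
    Nonempty (M ≃ₗ[R] LinearMap.range (d 0)) ∧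
    ∀ I : ModuleCat.{u} R, Module.Injective R I →
      ∀ i : ℤ, LinearMap.ker (LinearMap.rTensor I (d i)) =
        LinearMap.range (LinearMap.rTensor I (d (i + 1)))

/-- A class of `R`-modules is projectively resolving if it contains the projectives and,
in every short exact sequence `0 → A → B → C → 0` with `C` in the class, `A` is in the
class iff `B` is. -/
def ProjResolving (X : ModuleCat.{u} R → Prop) : Prop :=
  (∀ P : ModuleCat.{u} R, Module.Projective R P → X P) ∧
  ∀ (A B C : ModuleCat.{u} R) (i : A →ₗ[R] B) (p : B →ₗ[R] C),
    Function.Injective i → Function.Surjective p → LinearMap.range i = LinearMap.ker p →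
      X C → (X A ↔ X B)

/-- Gorenstein projective dimension at most `n`. -/
def GpdLE : ℕ → ModuleCat.{u} R → Prop
  | 0, M => IsGProjective R M
  | n + 1, M => ∃ (G : ModuleCat.{u} R) (p : G →ₗ[R] M),
      IsGProjective R G ∧ Function.Surjective p ∧ GpdLE n (ModuleCat.of R (LinearMap.ker p))

/-- Gorenstein flat dimension at most `n`. -/
def GfdLE : ℕ → ModuleCat.{u} R → Prop
  | 0, M => IsGFlat R M
  | n + 1, M => ∃ (G : ModuleCat.{u} R) (p : G →ₗ[R] M),
      IsGFlat R G ∧ Function.Surjective p ∧ GfdLE n (ModuleCat.of R (LinearMap.ker p))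

/-- Flat dimension at most `n`. -/
def FlatDimLE : ℕ → ModuleCat.{u} R → Prop
  | 0, M => Module.Flat R M
  | n + 1, M => ∃ (G : ModuleCat.{u} R) (p : G →ₗ[R] M),
      Module.Flat R G ∧ Function.Surjective p ∧ FlatDimLE n (ModuleCat.of R (LinearMap.ker p))

/-- Projective dimension at most `n`. -/
def ProjDimLE : ℕ → ModuleCat.{u} R → Prop
  | 0, M => Module.Projective R M
  | n + 1, M => ∃ (G : ModuleCat.{u} R) (p : G →ₗ[R] M),
      Module.Projective R G ∧ Function.Surjective p ∧
        ProjDimLE n (ModuleCat.of R (LinearMap.ker p))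

/-- `R` is a coherent ring: every finitely generated ideal is finitely presented. -/
def IsCoherent : Prop :=
  ∀ I : Ideal R, I.FG → Module.FinitePresentation R I

end Defs

/-
A Gorenstein projective `N` is the cokernel of a map `δ : P₂ → P₁` of projectives taken from
a totally acyclic complex, so every map `P₂ → Q` to a projective `Q` that vanishes on `ker δ`
factors through `δ`. Given an extension `0 → Q → E → N → 0`, lift `P₁ → N` to `φ : P₁ → E`;
`φ ∘ δ` lands in `Q`, hence equals `ψ ∘ δ` for some `ψ : P₁ → Q`, and `φ - ψ : P₁ → E` descends
to a splitting `N → E`. So `Ext¹(N, Q) = 0`.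

Splicing `0 → N → P → N → 0` with itself gives the complex `⋯ → P → P → ⋯` with differential
`i ∘ p`. A map `P → Q` killing `i ∘ p` factors through `p`, and it factors through `i ∘ p` as
soon as maps `N → Q` extend along `i`; this follows from `Ext¹(N, Q) = 0` by splitting the
pushout of `0 → N → P → N → 0` along `N → Q`.
-/

namespace LinearMap

variable {R M N P : Type*} [Ring R] [AddCommGroup M] [Module R M] [AddCommGroup N] [Module R N]
  [AddCommGroup P] [Module R P]

theorem exists_comp_eq_of_surjective_of_ker_le {π : M →ₗ[R] N} (hπ : Function.Surjective π)
    {f : M →ₗ[R] P} (h : ker π ≤ ker f) : ∃ g : N →ₗ[R] P, g ∘ₗ π = f :=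
  ⟨(ker π).liftQ f h ∘ₗ (π.quotKerEquivOfSurjective hπ).symm.toLinearMap, by ext; simp⟩

theorem exists_comp_eq_of_injective_of_range_le {j : N →ₗ[R] P} (hj : Function.Injective j)
    {t : M →ₗ[R] P} (h : range t ≤ range j) : ∃ g : M →ₗ[R] N, j ∘ₗ g = t :=
  ⟨(LinearEquiv.ofInjective j hj).symm.toLinearMap ∘ₗ
    t.codRestrict _ fun x => h (mem_range_self t x), by ext; simp⟩

end LinearMap

section Gorenstein

variable {R : Type u} [CommRing R]

theorem ext1Zero_of_presentation {N Q P₁ P₂ : Type u} [AddCommGroup N] [Module R N]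
    [AddCommGroup Q] [Module R Q] [AddCommGroup P₁] [Module R P₁] [Module.Projective R P₁]
    [AddCommGroup P₂] [Module R P₂] {δ : P₂ →ₗ[R] P₁} {π : P₁ →ₗ[R] N}
    (hexact : Function.Exact δ π) (hπ : Function.Surjective π)
    (hfactor : ∀ g : P₂ →ₗ[R] Q, ker δ ≤ ker g → ∃ ψ : P₁ →ₗ[R] Q, ψ ∘ₗ δ = g) :
    Ext1Zero R N Q := by
  intro E j q hj hq hjq
  obtain ⟨φ, hφ⟩ := Module.projective_lifting_property q π hq
  have hφδ : range (φ ∘ₗ δ) ≤ range j := by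
    rintro _ ⟨x, rfl⟩
    rw [hjq, mem_ker, comp_apply, ← comp_apply q, hφ, hexact.apply_apply_eq_zero]
  obtain ⟨g, hg⟩ := exists_comp_eq_of_injective_of_range_le hj hφδ
  have hg_ker : ker δ ≤ ker g := fun x hx => hj <| by
    rw [map_zero, ← comp_apply j, hg, comp_apply, mem_ker.mp hx, map_zero]
  obtain ⟨ψ, hψ⟩ := hfactor g hg_ker
  have hker : ker π ≤ ker (φ - j ∘ₗ ψ) := by
    rw [hexact.linearMap_ker_eq]
    rintro _ ⟨x, rfl⟩
    rw [mem_ker, LinearMap.sub_apply, comp_apply, ← comp_apply ψ, hψ, ← comp_apply j, hg,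
      comp_apply, sub_self]
  obtain ⟨s, hs⟩ := exists_comp_eq_of_surjective_of_ker_le hπ hker
  refine ⟨s, ext fun n => ?_⟩
  obtain ⟨x, rfl⟩ := hπ n
  have hqj : j (ψ x) ∈ ker q := hjq ▸ mem_range_self j (ψ x)
  calc q (s (π x)) = q (φ x - j (ψ x)) := by rw [← comp_apply s, hs]; rfl
    _ = π x := by rw [map_sub, mem_ker.mp hqj, sub_zero, ← comp_apply q, hφ]

theorem IsGProjective.ext1Zero {N : Type u} [AddCommGroup N] [Module R N]
    (hN : IsGProjective R N) (Q : ModuleCat.{u} R) (hQ : Module.Projective R Q) :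
    Ext1Zero R N Q := by
  obtain ⟨P, d, hP, -, hd_exact, ⟨e⟩, hd_lift⟩ := hN
  have := hP (0 + 1)
  refine ext1Zero_of_presentation (δ := d (0 + 1))
    (π := e.symm.toLinearMap ∘ₗ (d 0).rangeRestrict) ?_
    (e.symm.surjective.comp (d 0).surjective_rangeRestrict) fun g hg => ?_
  · rw [LinearMap.exact_iff, LinearEquiv.ker_comp, ker_rangeRestrict, hd_exact]
  · rw [hd_exact] at hg
    obtain ⟨ψ, hψ⟩ := hd_lift Q hQ (0 + 1) g (range_le_ker_iff.mp hg)
    exact ⟨ψ, hψ.symm⟩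

theorem Ext1Zero.exists_comp_eq {A B C Q : Type u} [AddCommGroup A] [Module R A]
    [AddCommGroup B] [Module R B] [AddCommGroup C] [Module R C] [AddCommGroup Q] [Module R Q]
    (hC : Ext1Zero R C Q) {i : A →ₗ[R] B} {p : B →ₗ[R] C} (hi : Function.Injective i)
    (hp : Function.Surjective p) (hexact : Function.Exact i p) (g : A →ₗ[R] Q) :
    ∃ h : B →ₗ[R] Q, h ∘ₗ i = g := by
  let W : Submodule R (Q × B) := range (g.prod (-i))
  have hmk : ∀ a, W.mkQ (0, i a) = W.mkQ (g a, 0) := fun a =>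
    (Submodule.Quotient.eq W).mpr ⟨-a, by simp⟩
  have hW : W ≤ ker (p ∘ₗ snd R Q B) := by
    rintro _ ⟨a, rfl⟩
    simp [hexact.apply_apply_eq_zero]
  let j : Q →ₗ[R] (Q × B) ⧸ W := W.mkQ ∘ₗ inl R Q B
  let q : (Q × B) ⧸ W →ₗ[R] C := W.liftQ (p ∘ₗ snd R Q B) hW
  have hj : Function.Injective j := by
    refine (injective_iff_map_eq_zero j).mpr fun x hx => ?_
    obtain ⟨a, ha⟩ := (Submodule.Quotient.mk_eq_zero W).mp hx
    obtain ⟨rfl, hia⟩ : g a = x ∧ i a = 0 := by simpa [Prod.ext_iff] using ha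
    rw [(injective_iff_map_eq_zero i).mp hi a hia, map_zero]
  have hq : Function.Surjective q := fun c => by
    obtain ⟨b, rfl⟩ := hp c
    exact ⟨W.mkQ (0, b), rfl⟩
  have hjq : range j = ker q := by
    refine le_antisymm (range_le_ker_iff.mpr (by ext; simp [j, q])) fun e he => ?_
    obtain ⟨⟨x, b⟩, rfl⟩ := W.mkQ_surjective e
    obtain ⟨a, rfl⟩ := (hexact b).mp he
    exact ⟨x + g a, (Submodule.Quotient.eq W).mpr ⟨a, by simp⟩⟩
  obtain ⟨s, hs⟩ := hC (ModuleCat.of R ((Q × B) ⧸ W)) j q hj hq hjq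
  have hsplit := (LinearMap.exact_iff.mpr hjq.symm).split_tfae hj hq
  obtain ⟨l, hl⟩ :=
    (hsplit.out 0 1).mp (⟨s, hs⟩ : ∃ s : C →ₗ[R] (Q × B) ⧸ W, q ∘ₗ s = LinearMap.id)
  refine ⟨l ∘ₗ W.mkQ ∘ₗ inr R Q B, ext fun a => ?_⟩
  change l (W.mkQ (0, i a)) = g a
  rw [hmk]
  exact congr($hl (g a))

theorem isSGProjective_of_exact {N : Type u} [AddCommGroup N] [Module R N]
    (P : ModuleCat.{u} R) (hP : Module.Projective R P) {i : N →ₗ[R] P} {p : P →ₗ[R] N}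
    (hi : Function.Injective i) (hp : Function.Surjective p) (hexact : Function.Exact i p)
    (hext : ∀ Q : ModuleCat.{u} R, Module.Projective R Q → Ext1Zero R N Q) :
    IsSGProjective R N := by
  have hrange : range (i ∘ₗ p) = range i := range_comp_of_range_eq_top i (range_eq_top.mpr hp)
  refine ⟨P, hP, i ∘ₗ p, ?_, ?_, ⟨(LinearEquiv.ofInjective i hi).trans (.ofEq _ _ hrange.symm)⟩,
    fun Q hQ g hg => ?_⟩
  · ext x
    simp [hexact.apply_apply_eq_zero]
  · rw [hrange, ker_comp, ker_eq_bot.mpr hi, Submodule.comap_bot, hexact.linearMap_ker_eq]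
  · have hker : ker p ≤ ker g := by
      rw [hexact.linearMap_ker_eq, ← hrange, range_le_ker_iff, hg]
    obtain ⟨g', rfl⟩ := exists_comp_eq_of_surjective_of_ker_le hp hker
    obtain ⟨h, hh⟩ := (hext Q hQ).exists_comp_eq hi hp hexact g'
    exact ⟨h, by rw [← hh, comp_assoc]⟩

end Gorenstein

theorem stmt8_general (R : Type u) [CommRing R]
    (N : Type u) [AddCommGroup N] [Module R N] (hN : IsGProjective R N)
    (P : ModuleCat.{u} R) (hP : Module.Projective R P)
    (i : N →ₗ[R] P) (p : P →ₗ[R] N)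
    (hi : Function.Injective i) (hp : Function.Surjective p)
    (he : LinearMap.range i = LinearMap.ker p) :
    (∀ Q : ModuleCat.{u} R, Module.Projective R Q → Ext1Zero R N Q) ∧
      IsSGProjective R N :=
  ⟨hN.ext1Zero, isSGProjective_of_exact P hP hi hp (LinearMap.exact_iff.mpr he.symm) hN.ext1Zero⟩

/-- Over a ring of finite Gorenstein global dimension, a Gorenstein projective
module `N` admitting a short exact sequence `0 → N → P → N → 0` with `P` projective
satisfies `Ext¹_R(N, Q) = 0` for every projective `Q`, hence is strongly Gorenstein
projective. -/
theorem stmt8 (R : Type u) [CommRing R]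
    (hgl : ∃ n : ℕ, ∀ M : ModuleCat.{u} R, GpdLE R n M)
    (N : Type u) [AddCommGroup N] [Module R N] (hN : IsGProjective R N)
    (P : ModuleCat.{u} R) (hP : Module.Projective R P)
    (i : N →ₗ[R] P) (p : P →ₗ[R] N)
    (hi : Function.Injective i) (hp : Function.Surjective p)
    (he : LinearMap.range i = LinearMap.ker p) :
    (∀ Q : ModuleCat.{u} R, Module.Projective R Q → Ext1Zero R N Q) ∧
      IsSGProjective R N :=
  stmt8_general R N hN P hP i p hi hp he
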